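/- arXiv:math/0505554 — 2 statements merged into one kernel-verified Lean document; each statement's English description precedes it below -/
import Mathlib

section
/- Let U ⊆ ℝⁿ be open, let A_j, A_j' : U → M_m(ℂ) (j = 1,…,n) be continuous, and let g : U → M_m(ℂ) be differentiable with g(x) invertible for every x ∈ U, such that A_j'(x) = g(x)^{-1} A_j(x) g(x) − i g(x)^{-1} ∂g/∂x_j(x) on U for every j. Let γ : [0,T] → U be continuously differentiable, and let c and c' be the gauge phase factors of A and A' along γ, respectively. Then c'(τ) = g(γ(τ))^{-1} c(τ) g(γ(0)) for all τ ∈ [0,T]. -/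
attribute [local instance] Matrix.frobeniusNormedRing Matrix.frobeniusNormedAlgebra

/-!
Both `τ ↦ g (γ τ) * c' τ` and `τ ↦ c τ * g (γ 0)` solve the linear equation
`X' = -i (γ̇ · A(γ)) X` with initial value `g (γ 0)`: differentiating `g` along `γ` produces
`g'(γ̇)`, which cancels exactly against the term `-i g⁻¹ ∂g` of the gauge transformation.
Solutions of a linear equation with continuous coefficient are unique, as the coefficient is
bounded on `[0, T]`, which makes the right-hand side Lipschitz.
-/

open Set Complex

theorem ODE_solution_unique_mul_left {R : Type*} [NonUnitalNormedRing R] [NormedSpace ℝ R]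
    {M f g : ℝ → R} {a b : ℝ} (hM : ContinuousOn M (Icc a b))
    (hf : ∀ t ∈ Icc a b, HasDerivWithinAt f (M t * f t) (Icc a b) t)
    (hg : ∀ t ∈ Icc a b, HasDerivWithinAt g (M t * g t) (Icc a b) t)
    (ha : f a = g a) : EqOn f g (Icc a b) := by
  obtain ⟨K, hK⟩ := isCompact_Icc.exists_bound_of_continuousOn hM
  have hlip : ∀ t ∈ Ico a b, LipschitzOnWith (Real.toNNReal K) (M t * ·) univ := fun t ht ↦
    (LipschitzWith.of_dist_le_mul fun X Y ↦ by
      rw [dist_eq_norm, dist_eq_norm, ← mul_sub]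
      exact (norm_mul_le _ _).trans (mul_le_mul_of_nonneg_right
        ((hK t (Ico_subset_Icc_self ht)).trans (Real.le_coe_toNNReal K)) (norm_nonneg _))
      ).lipschitzOnWith
  have hright {h : ℝ → R} (hh : ∀ t ∈ Icc a b, HasDerivWithinAt h (M t * h t) (Icc a b) t)
      (t : ℝ) (ht : t ∈ Ico a b) : HasDerivWithinAt h (M t * h t) (Ici t) t :=
    (hh t (Ico_subset_Icc_self ht)).mono_of_mem_nhdsWithin (Icc_mem_nhdsGE_of_mem ht)
  exact ODE_solution_unique_of_mem_Icc_right hlip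
    (fun t ht ↦ (hf t ht).continuousWithinAt) (hright hf) (fun _ _ ↦ mem_univ _)
    (fun t ht ↦ (hg t ht).continuousWithinAt) (hright hg) (fun _ _ ↦ mem_univ _) ha

theorem HasDerivWithinAt.gauge_mul {R : Type*} [NormedRing R] [NormedAlgebra ℝ R]
    {u c : ℝ → R} {u' B B' : R} {s : Set ℝ} {t : ℝ} (hu : HasDerivWithinAt u u' s t)
    (hc : HasDerivWithinAt c (B' * c t) s t) (hB : u t * B' = B * u t - u') :
    HasDerivWithinAt (fun t ↦ u t * c t) (B * (u t * c t)) s t := by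
  refine (hu.mul hc).congr_deriv ?_
  rw [← mul_assoc, hB, ← mul_assoc]
  noncomm_ring

theorem mul_neg_I_smul_sum_of_gauge {ι R : Type*} [Fintype ι] [Ring R] [Algebra ℂ R]
    {G Gi : R} (hG : G * Gi = 1) {A A' D : ι → R}
    (hA' : ∀ j, A' j = Gi * A j * G - I • (Gi * D j)) (v : ι → ℂ) :
    G * (-I • ∑ j, v j • A' j) = (-I • ∑ j, v j • A j) * G - ∑ j, v j • D j := by
  have hGi (X : R) : G * (Gi * X) = X := by rw [← mul_assoc, hG, one_mul]
  simp only [hA', Finset.smul_sum, Finset.mul_sum, Finset.sum_mul, ← Finset.sum_sub_distrib]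
  refine Finset.sum_congr rfl fun j _ ↦ ?_
  rw [mul_smul_comm, mul_smul_comm, mul_sub, mul_smul_comm, mul_assoc, hGi, hGi, smul_mul_assoc,
    smul_mul_assoc, smul_sub, smul_sub]
  simp only [smul_smul]
  congr 2
  rw [mul_left_comm, neg_mul, I_mul_I, neg_neg, mul_one]

theorem map_eq_sum_ofReal_smul_single {ι R F : Type*} [Fintype ι] [DecidableEq ι]
    [AddCommGroup R] [Module ℂ R] [Module ℝ R] [IsScalarTower ℝ ℂ R]
    [FunLike F (ι → ℝ) R] [LinearMapClass F ℝ (ι → ℝ) R] (L : F) (v : ι → ℝ) :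
    L v = ∑ j, (v j : ℂ) • L (Pi.single j 1) := by
  conv_lhs => rw [pi_eq_sum_univ' v]
  simp only [map_sum, map_smul, RCLike.real_smul_eq_coe_smul (K := ℂ)]
  rfl

theorem gauge_phase_factor_gauge_transform_general (n m : ℕ) (T : ℝ)
    (U : Set (Fin n → ℝ))
    (A A' : Fin n → (Fin n → ℝ) → Matrix (Fin m) (Fin m) ℂ)
    (hA : ∀ j, ContinuousOn (A j) U)
    (g : (Fin n → ℝ) → Matrix (Fin m) (Fin m) ℂ)
    (g' : (Fin n → ℝ) → ((Fin n → ℝ) →L[ℝ] Matrix (Fin m) (Fin m) ℂ))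
    (hg : ∀ x ∈ U, HasFDerivAt g (g' x) x)
    (hginv : ∀ x ∈ U, IsUnit (g x))
    (hgauge : ∀ j, ∀ x ∈ U,
      A' j x = (g x)⁻¹ * A j x * g x - Complex.I • ((g x)⁻¹ * g' x (Pi.single j 1)))
    (γ : ℝ → (Fin n → ℝ)) (γd : ℝ → (Fin n → ℝ))
    (hγU : Set.MapsTo γ (Set.Icc 0 T) U)
    (hγ : ∀ τ ∈ Set.Icc (0:ℝ) T, HasDerivWithinAt γ (γd τ) (Set.Icc 0 T) τ)
    (hγd : ContinuousOn γd (Set.Icc 0 T))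
    (c c' : ℝ → Matrix (Fin m) (Fin m) ℂ)
    (hc : ∀ τ ∈ Set.Icc (0:ℝ) T,
      HasDerivWithinAt c
        (-Complex.I • ((∑ j, (γd τ j : ℂ) • A j (γ τ)) * c τ)) (Set.Icc 0 T) τ)
    (hc0 : c 0 = 1)
    (hc' : ∀ τ ∈ Set.Icc (0:ℝ) T,
      HasDerivWithinAt c'
        (-Complex.I • ((∑ j, (γd τ j : ℂ) • A' j (γ τ)) * c' τ)) (Set.Icc 0 T) τ)
    (hc'0 : c' 0 = 1) :
    ∀ τ ∈ Set.Icc (0:ℝ) T, c' τ = (g (γ τ))⁻¹ * c τ * g (γ 0) := by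
  intro τ hτ
  have hdet : ∀ x ∈ U, IsUnit (g x).det := fun x hx ↦
    (Matrix.isUnit_iff_isUnit_det _).mp (hginv x hx)
  set N : (Fin n → (Fin n → ℝ) → Matrix (Fin m) (Fin m) ℂ) → ℝ → Matrix (Fin m) (Fin m) ℂ :=
    fun B s ↦ -I • ∑ j, (γd s j : ℂ) • B j (γ s) with hN
  have hNA : ContinuousOn (N A) (Icc 0 T) := by
    have hγc : ContinuousOn γ (Icc 0 T) := fun s hs ↦ (hγ s hs).continuousWithinAt
    refine (continuousOn_finsetSum _ fun j _ ↦ ?_).const_smul (-I)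
    exact (continuous_ofReal.comp_continuousOn ((continuous_apply j).comp_continuousOn hγd)).smul
      ((hA j).comp hγc hγU)
  have hgaugeN : ∀ s ∈ Icc 0 T, g (γ s) * N A' s = N A s * g (γ s) - g' (γ s) (γd s) := by
    intro s hs
    rw [map_eq_sum_ofReal_smul_single (g' (γ s))]
    exact mul_neg_I_smul_sum_of_gauge (Matrix.mul_nonsing_inv _ (hdet _ (hγU hs)))
      (hgauge · _ (hγU hs)) _
  have hgc' : ∀ s ∈ Icc 0 T, HasDerivWithinAt (fun s ↦ g (γ s) * c' s)
      (N A s * (g (γ s) * c' s)) (Icc 0 T) s := fun s hs ↦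
    ((hg _ (hγU hs)).comp_hasDerivWithinAt s (hγ s hs)).gauge_mul
      ((hc' s hs).congr_deriv (smul_mul_assoc _ _ _).symm) (hgaugeN s hs)
  have hcg : ∀ s ∈ Icc 0 T, HasDerivWithinAt (fun s ↦ c s * g (γ 0))
      (N A s * (c s * g (γ 0))) (Icc 0 T) s := fun s hs ↦
    ((hc s hs).mul_const (g (γ 0))).congr_deriv (by simp only [hN, smul_mul_assoc, mul_assoc])
  have hgauged : g (γ τ) * c' τ = c τ * g (γ 0) :=
    ODE_solution_unique_mul_left hNA hgc' hcg (by rw [hc0, hc'0, mul_one, one_mul]) hτ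
  rw [mul_assoc, ← hgauged, Matrix.nonsing_inv_mul_cancel_left _ _ (hdet _ (hγU hτ))]

/-- Transformation of the gauge phase factor under a gauge transformation:
if `A'_j = g⁻¹ A_j g - i g⁻¹ ∂g/∂x_j` on an open set `U` and `γ : [0,T] → U` is a `C¹`
path, then the gauge phase factors `c` of `A` and `c'` of `A'` along `γ` (solutions of
`i ċ = (γ̇ ⬝ A(γ)) c`, `c 0 = I`) satisfy `c' τ = g(γ τ)⁻¹ * c τ * g(γ 0)`. -/
theorem gauge_phase_factor_gauge_transform (n m : ℕ) (T : ℝ) (hT : 0 < T)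
    (U : Set (Fin n → ℝ)) (hU : IsOpen U)
    (A A' : Fin n → (Fin n → ℝ) → Matrix (Fin m) (Fin m) ℂ)
    (hA : ∀ j, ContinuousOn (A j) U) (hA' : ∀ j, ContinuousOn (A' j) U)
    (g : (Fin n → ℝ) → Matrix (Fin m) (Fin m) ℂ)
    (g' : (Fin n → ℝ) → ((Fin n → ℝ) →L[ℝ] Matrix (Fin m) (Fin m) ℂ))
    (hg : ∀ x ∈ U, HasFDerivAt g (g' x) x)
    (hginv : ∀ x ∈ U, IsUnit (g x))
    (hgauge : ∀ j, ∀ x ∈ U,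
      A' j x = (g x)⁻¹ * A j x * g x - Complex.I • ((g x)⁻¹ * g' x (Pi.single j 1)))
    (γ : ℝ → (Fin n → ℝ)) (γd : ℝ → (Fin n → ℝ))
    (hγU : Set.MapsTo γ (Set.Icc 0 T) U)
    (hγ : ∀ τ ∈ Set.Icc (0:ℝ) T, HasDerivWithinAt γ (γd τ) (Set.Icc 0 T) τ)
    (hγd : ContinuousOn γd (Set.Icc 0 T))
    (c c' : ℝ → Matrix (Fin m) (Fin m) ℂ)
    (hc : ∀ τ ∈ Set.Icc (0:ℝ) T,
      HasDerivWithinAt c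
        (-Complex.I • ((∑ j, (γd τ j : ℂ) • A j (γ τ)) * c τ)) (Set.Icc 0 T) τ)
    (hc0 : c 0 = 1)
    (hc' : ∀ τ ∈ Set.Icc (0:ℝ) T,
      HasDerivWithinAt c'
        (-Complex.I • ((∑ j, (γd τ j : ℂ) • A' j (γ τ)) * c' τ)) (Set.Icc 0 T) τ)
    (hc'0 : c' 0 = 1) :
    ∀ τ ∈ Set.Icc (0:ℝ) T, c' τ = (g (γ τ))⁻¹ * c τ * g (γ 0) :=
  gauge_phase_factor_gauge_transform_general n m T U A A' hA g g' hg hginv hgauge γ γd hγU hγ hγd c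
    c' hc hc0 hc' hc'0
end

section
/- Let U ⊆ ℝⁿ be open, let A_j, A_j' : U → M_m(ℂ) be continuous, and let g : U → M_m(ℂ) be differentiable with invertible values such that A_j' = g^{-1} A_j g − i g^{-1} ∂g/∂x_j on U for every j. Let γ : [0,T] → U be a continuously differentiable closed path with γ(0) = γ(T) = x⁰ and suppose g(x⁰) = I_m. Then the Wu–Yang gauge phase factors of the two potentials around the loop coincide: c'(T) = c(T), where c and c' are the gauge phase factors of A and A' along γ. -/
/-! If `c'` solves `i c' = (γ̇·A') c'` then, by the gauge relation
`i ∂g = (γ̇·A) g - g (γ̇·A')` along the path, `w := g(γ) c'` solves the same linear equation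
`i w' = (γ̇·A) w` as `c`, and `w 0 = g(x⁰) = 1 = c 0`. Uniqueness for linear ODEs gives `w = c`,
and at the end of the loop `w T = g(x⁰) c'(T) = c'(T)`. -/

open Set

attribute [local instance] Matrix.frobeniusNormedRing Matrix.frobeniusNormedAlgebra

section LinearODE

variable {R : Type*} [NormedRing R] [NormedSpace ℝ R]

theorem eqOn_Icc_of_hasDerivWithinAt_mul_left {N f g : ℝ → R} {a b : ℝ}
    (hN : ContinuousOn N (Icc a b))
    (hf : ∀ t ∈ Icc a b, HasDerivWithinAt f (N t * f t) (Icc a b) t)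
    (hg : ∀ t ∈ Icc a b, HasDerivWithinAt g (N t * g t) (Icc a b) t)
    (ha : f a = g a) :
    EqOn f g (Icc a b) := by
  obtain ⟨C, hC⟩ := isCompact_Icc.exists_bound_of_continuousOn hN
  have hlip : ∀ t ∈ Ico a b, LipschitzOnWith C.toNNReal (N t * ·) univ := fun t ht =>
    LipschitzWith.lipschitzOnWith <| LipschitzWith.of_dist_le_mul fun X Y => by
      rw [dist_eq_norm, dist_eq_norm, ← mul_sub]
      exact (norm_mul_le _ _).trans <| by
        gcongr; exact (hC t (Ico_subset_Icc_self ht)).trans (Real.le_coe_toNNReal C)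
  have hIci : ∀ {u : ℝ → R}, (∀ t ∈ Icc a b, HasDerivWithinAt u (N t * u t) (Icc a b) t) →
      ∀ t ∈ Ico a b, HasDerivWithinAt u (N t * u t) (Ici t) t := fun hu t ht =>
    (hu t (Ico_subset_Icc_self ht)).mono_of_mem_nhdsWithin (Icc_mem_nhdsGE_of_mem ht)
  exact ODE_solution_unique_of_mem_Icc_right hlip
    (fun t ht => (hf t ht).continuousWithinAt) (hIci hf) (fun _ _ => trivial)
    (fun t ht => (hg t ht).continuousWithinAt) (hIci hg) (fun _ _ => trivial) ha

end LinearODE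

section Gauge

variable {ι n : Type*} [Fintype ι]

/-- The pairing `v·A` of a tangent vector with a potential: the one-form `∑ⱼ Aⱼ dxʲ` on `v`. -/
def connectionForm (A : ι → Matrix n n ℂ) (v : ι → ℝ) : Matrix n n ℂ :=
  ∑ j, (v j : ℂ) • A j

theorem continuousOn_connectionForm_comp {X : Type*} [TopologicalSpace X]
    {A : ι → X → Matrix n n ℂ} {U : Set X} (hA : ∀ j, ContinuousOn (A j) U)
    {γ : ℝ → X} {γd : ℝ → ι → ℝ} {s : Set ℝ} (hγ : ContinuousOn γ s) (hγU : MapsTo γ s U)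
    (hγd : ContinuousOn γd s) :
    ContinuousOn (fun t => connectionForm (fun j => A j (γ t)) (γd t)) s :=
  continuousOn_finsetSum _ fun j _ =>
    (Complex.continuous_ofReal.comp_continuousOn ((continuous_apply j).comp_continuousOn hγd)).smul
      ((hA j).comp hγ hγU)

theorem ContinuousLinearMap.apply_eq_sum_smul_single [DecidableEq ι]
    {M : Type*} [TopologicalSpace M] [AddCommMonoid M] [Module ℝ M]
    (D : (ι → ℝ) →L[ℝ] M) (v : ι → ℝ) :
    D v = ∑ j, v j • D (Pi.single j 1) := by
  conv_lhs => rw [pi_eq_sum_univ' v]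
  simp only [map_sum, map_smul]

theorem mul_connectionForm_of_gauge [DecidableEq ι] [Fintype n] [DecidableEq n]
    {G : Matrix n n ℂ} (hG : IsUnit G) {A A' : ι → Matrix n n ℂ} (D : (ι → ℝ) →L[ℝ] Matrix n n ℂ)
    (hA' : ∀ j, A' j = G⁻¹ * A j * G - Complex.I • (G⁻¹ * D (Pi.single j 1))) (v : ι → ℝ) :
    G * connectionForm A' v = connectionForm A v * G - Complex.I • D v := by
  have hdet : IsUnit G.det := (Matrix.isUnit_iff_isUnit_det G).mp hG
  have hterm : ∀ j, G * A' j = A j * G - Complex.I • D (Pi.single j 1) := fun j => by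
    rw [hA', mul_sub, mul_smul_comm, ← mul_assoc, ← mul_assoc, ← mul_assoc,
      Matrix.mul_nonsing_inv G hdet, one_mul, one_mul]
  simp only [connectionForm, Finset.mul_sum, mul_smul_comm, hterm, D.apply_eq_sum_smul_single v,
    smul_sub, Finset.sum_sub_distrib, Finset.sum_mul, smul_mul_assoc, Finset.smul_sum,
    ← Complex.coe_smul, smul_comm (v _ : ℂ) Complex.I]

/-- If `c` solves `i c' = P' c` and `i G' = P G - G P'`, then `G c` solves `i (G c)' = P (G c)`. -/
theorem HasDerivWithinAt.mul_of_gauge [Fintype n] [DecidableEq n] {G c : ℝ → Matrix n n ℂ}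
    {G' P P' : Matrix n n ℂ} {s : Set ℝ} {τ : ℝ} (hG : HasDerivWithinAt G G' s τ)
    (hc : HasDerivWithinAt c (-Complex.I • (P' * c τ)) s τ)
    (hP : G τ * P' = P * G τ - Complex.I • G') :
    HasDerivWithinAt (fun t => G t * c t) (-Complex.I • (P * (G τ * c τ))) s τ := by
  refine (hG.mul hc).congr_deriv ?_
  rw [mul_smul_comm, ← mul_assoc, hP, sub_mul, smul_sub, smul_mul_assoc, smul_smul,
    neg_mul, Complex.I_mul_I, neg_neg, one_smul, mul_assoc]
  abel

end Gauge

theorem wu_yang_phase_factor_gauge_invariant_general (n m : ℕ) (T : ℝ) (hT : 0 < T)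
    (U : Set (Fin n → ℝ))
    (A A' : Fin n → (Fin n → ℝ) → Matrix (Fin m) (Fin m) ℂ)
    (hA : ∀ j, ContinuousOn (A j) U)
    (g : (Fin n → ℝ) → Matrix (Fin m) (Fin m) ℂ)
    (g' : (Fin n → ℝ) → ((Fin n → ℝ) →L[ℝ] Matrix (Fin m) (Fin m) ℂ))
    (hg : ∀ x ∈ U, HasFDerivAt g (g' x) x)
    (hginv : ∀ x ∈ U, IsUnit (g x))
    (hgauge : ∀ j, ∀ x ∈ U,
      A' j x = (g x)⁻¹ * A j x * g x - Complex.I • ((g x)⁻¹ * g' x (Pi.single j 1)))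
    (x0 : Fin n → ℝ)
    (γ : ℝ → (Fin n → ℝ)) (γd : ℝ → (Fin n → ℝ))
    (hγU : Set.MapsTo γ (Set.Icc 0 T) U)
    (hγ : ∀ τ ∈ Set.Icc (0:ℝ) T, HasDerivWithinAt γ (γd τ) (Set.Icc 0 T) τ)
    (hγd : ContinuousOn γd (Set.Icc 0 T))
    (hγ0 : γ 0 = x0) (hγT : γ T = x0) (hgx0 : g x0 = 1)
    (c c' : ℝ → Matrix (Fin m) (Fin m) ℂ)
    (hc : ∀ τ ∈ Set.Icc (0:ℝ) T,
      HasDerivWithinAt c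
        (-Complex.I • ((∑ j, (γd τ j : ℂ) • A j (γ τ)) * c τ)) (Set.Icc 0 T) τ)
    (hc0 : c 0 = 1)
    (hc' : ∀ τ ∈ Set.Icc (0:ℝ) T,
      HasDerivWithinAt c'
        (-Complex.I • ((∑ j, (γd τ j : ℂ) • A' j (γ τ)) * c' τ)) (Set.Icc 0 T) τ)
    (hc'0 : c' 0 = 1) :
    c' T = c T := by
  set P : ℝ → Matrix (Fin m) (Fin m) ℂ := fun t => connectionForm (fun j => A j (γ t)) (γd t)
  have hP : ContinuousOn (fun t => -Complex.I • P t) (Icc 0 T) :=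
    (continuousOn_connectionForm_comp hA (fun t ht => (hγ t ht).continuousWithinAt) hγU
      hγd).const_smul (-Complex.I)
  have hgc' : ∀ τ ∈ Icc 0 T, HasDerivWithinAt (fun t => g (γ t) * c' t)
      ((-Complex.I • P τ) * (g (γ τ) * c' τ)) (Icc 0 T) τ := fun τ hτ => by
    rw [smul_mul_assoc]
    exact HasDerivWithinAt.mul_of_gauge (G := g ∘ γ)
      ((hg _ (hγU hτ)).comp_hasDerivWithinAt τ (hγ τ hτ)) (hc' τ hτ)
      (mul_connectionForm_of_gauge (hginv _ (hγU hτ)) _ (fun j => hgauge j _ (hγU hτ)) (γd τ))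
  have hcP : ∀ τ ∈ Icc 0 T, HasDerivWithinAt c ((-Complex.I • P τ) * c τ) (Icc 0 T) τ :=
    fun τ hτ => by rw [smul_mul_assoc]; exact hc τ hτ
  have hgc'_eq_c := eqOn_Icc_of_hasDerivWithinAt_mul_left hP hgc' hcP
    (by simp [hγ0, hgx0, hc0, hc'0]) ⟨hT.le, le_rfl⟩
  simpa [hγT, hgx0] using hgc'_eq_c

/-- The Wu–Yang gauge phase factor of a closed loop is invariant under gauge
transformations whose gauge is the identity at the base point: if
`A'_j = g⁻¹ A_j g - i g⁻¹ ∂g/∂x_j` on an open set `U`, `γ` is a `C¹` closed path in `U`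
with `γ 0 = γ T = x0` and `g x0 = I`, then the phase factors of `A` and `A'` along `γ`
satisfy `c' T = c T`. -/
theorem wu_yang_phase_factor_gauge_invariant (n m : ℕ) (T : ℝ) (hT : 0 < T)
    (U : Set (Fin n → ℝ)) (hU : IsOpen U)
    (A A' : Fin n → (Fin n → ℝ) → Matrix (Fin m) (Fin m) ℂ)
    (hA : ∀ j, ContinuousOn (A j) U) (hA' : ∀ j, ContinuousOn (A' j) U)
    (g : (Fin n → ℝ) → Matrix (Fin m) (Fin m) ℂ)
    (g' : (Fin n → ℝ) → ((Fin n → ℝ) →L[ℝ] Matrix (Fin m) (Fin m) ℂ))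
    (hg : ∀ x ∈ U, HasFDerivAt g (g' x) x)
    (hginv : ∀ x ∈ U, IsUnit (g x))
    (hgauge : ∀ j, ∀ x ∈ U,
      A' j x = (g x)⁻¹ * A j x * g x - Complex.I • ((g x)⁻¹ * g' x (Pi.single j 1)))
    (x0 : Fin n → ℝ)
    (γ : ℝ → (Fin n → ℝ)) (γd : ℝ → (Fin n → ℝ))
    (hγU : Set.MapsTo γ (Set.Icc 0 T) U)
    (hγ : ∀ τ ∈ Set.Icc (0:ℝ) T, HasDerivWithinAt γ (γd τ) (Set.Icc 0 T) τ)
    (hγd : ContinuousOn γd (Set.Icc 0 T))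
    (hγ0 : γ 0 = x0) (hγT : γ T = x0) (hgx0 : g x0 = 1)
    (c c' : ℝ → Matrix (Fin m) (Fin m) ℂ)
    (hc : ∀ τ ∈ Set.Icc (0:ℝ) T,
      HasDerivWithinAt c
        (-Complex.I • ((∑ j, (γd τ j : ℂ) • A j (γ τ)) * c τ)) (Set.Icc 0 T) τ)
    (hc0 : c 0 = 1)
    (hc' : ∀ τ ∈ Set.Icc (0:ℝ) T,
      HasDerivWithinAt c'
        (-Complex.I • ((∑ j, (γd τ j : ℂ) • A' j (γ τ)) * c' τ)) (Set.Icc 0 T) τ)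
    (hc'0 : c' 0 = 1) :
    c' T = c T :=
  wu_yang_phase_factor_gauge_invariant_general n m T hT U A A' hA g g' hg hginv hgauge x0 γ γd hγU
    hγ hγd hγ0 hγT hgx0 c c' hc hc0 hc' hc'0
end
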